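/- arXiv:2407.06132 — 3 statements merged into one kernel-verified Lean document; each statement's English description precedes it below -/
import Mathlib

section
/- For all t in (0,1], the function φ(t) := (1/t²)·D((1-t)/2 ∥ 1/2) is nondecreasing, where D(a∥b) = a·log(a/b) + (1-a)·log((1-a)/(1-b)) is the binary relative entropy (base 2). Equivalently, for any 0 < t ≤ c ≤ 1, 1 - H((1-t)/2) ≤ (1 - H((1-c)/2))·(t/c)², where H is the binary entropy function. -/
noncomputable def binH (a : ℝ) : ℝ := -(a * Real.logb 2 a) - (1 - a) * Real.logb 2 (1 - a)

/-!
We have `1 - H((1 - t)/2) = klHalf t / log 2`, and the derivative of `klHalf` is `artanh`.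
Hence `klHalf t / t²` is nondecreasing as soon as `2 klHalf t ≤ t artanh t`. Both sides vanish
at `0`, and the derivative of their difference is `t / (1 - t²) - artanh t ≥ 0`: the power series
`∑ t^(2k+1) / (2k+1)` of `artanh` is termwise dominated by the geometric series `∑ t^(2k+1)`.
-/

open Real Set

namespace Real

theorem artanh_eq_half_sub_log {x : ℝ} (hx : x ∈ Ioo (-1) 1) :
    artanh x = (log (1 + x) - log (1 - x)) / 2 := by
  rw [artanh_eq_half_log (Ioo_subset_Icc_self hx), log_div (by grind) (by grind)]
  ring

theorem hasDerivAt_artanh {x : ℝ} (hx : x ∈ Ioo (-1) 1) :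
    HasDerivAt artanh (1 - x ^ 2)⁻¹ x := by
  have hx₁ : 1 + x ≠ 0 := by grind
  have hx₂ : 1 - x ≠ 0 := by grind
  have hlog : HasDerivAt (fun y => (log (1 + y) - log (1 - y)) / 2)
      ((1 / (1 + x) - -1 / (1 - x)) / 2) x :=
    ((((hasDerivAt_id' x).const_add 1).log hx₁).sub
      (((hasDerivAt_id' x).const_sub 1).log hx₂)).div_const 2
  refine (hlog.congr_of_eventuallyEq ?_).congr_deriv ?_
  · filter_upwards [Ioo_mem_nhds hx.1 hx.2] with y hy using artanh_eq_half_sub_log hy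
  · rw [show 1 - x ^ 2 = (1 + x) * (1 - x) by ring]
    field_simp
    ring

theorem artanh_le_div_one_sub_sq {x : ℝ} (h₀ : 0 ≤ x) (h₁ : x < 1) :
    artanh x ≤ x / (1 - x ^ 2) := by
  have hseries := hasSum_log_sub_log_of_abs_lt_one (abs_lt.2 ⟨by linarith, h₁⟩)
  have hgeom : HasSum (fun k : ℕ => 2 * x ^ (2 * k + 1)) (2 * (x / (1 - x ^ 2))) := by
    have hpow : (fun k : ℕ => 2 * x ^ (2 * k + 1)) = fun k => 2 * x * (x ^ 2) ^ k := by
      ext k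
      rw [pow_succ, pow_mul]
      ring
    rw [hpow, div_eq_mul_inv, ← mul_assoc]
    exact (hasSum_geometric_of_lt_one (sq_nonneg x) (by nlinarith)).mul_left (2 * x)
  have hterm (k : ℕ) : 2 * (1 / (2 * k + 1)) * x ^ (2 * k + 1) ≤ 2 * x ^ (2 * k + 1) := by
    have : (1 : ℝ) / (2 * k + 1) ≤ 1 :=
      div_le_one_of_le₀ (by linarith [k.cast_nonneg (α := ℝ)]) (by positivity)
    have : 0 ≤ x ^ (2 * k + 1) := by positivity
    nlinarith
  rw [artanh_eq_half_sub_log ⟨by linarith, h₁⟩]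
  linarith [hasSum_le hterm hseries hgeom]

end Real

/-- `klHalf t = log 2 · D((1 - t)/2 ∥ 1/2)`. -/
noncomputable def klHalf (t : ℝ) : ℝ := ((1 - t) * log (1 - t) + (1 + t) * log (1 + t)) / 2

theorem half_mul_log_half (x : ℝ) : x / 2 * log (x / 2) = (x * log x - x * log 2) / 2 := by
  rcases eq_or_ne x 0 with rfl | hx
  · simp
  · rw [log_div hx two_ne_zero]
    ring

theorem one_sub_binH_eq (t : ℝ) : 1 - binH ((1 - t) / 2) = klHalf t / log 2 := by
  have hlog2 : log 2 ≠ 0 := (log_pos one_lt_two).ne'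
  have hp : 1 - (1 - t) / 2 = (1 + t) / 2 := by ring
  rw [binH, hp, logb, logb, ← mul_div_assoc, ← mul_div_assoc, half_mul_log_half,
    half_mul_log_half, klHalf]
  field_simp
  ring

theorem klHalf_zero : klHalf 0 = 0 := by
  simp [klHalf]

theorem continuous_klHalf : Continuous klHalf := by
  unfold klHalf
  fun_prop

theorem hasDerivAt_klHalf {t : ℝ} (ht : t ∈ Ioo (-1) 1) : HasDerivAt klHalf (artanh t) t := by
  have hx₁ : 1 + t ≠ 0 := by grind
  have hx₂ : 1 - t ≠ 0 := by grind
  have h₁ := ((hasDerivAt_id' t).const_sub 1).mul (((hasDerivAt_id' t).const_sub 1).log hx₂)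
  have h₂ := ((hasDerivAt_id' t).const_add 1).mul (((hasDerivAt_id' t).const_add 1).log hx₁)
  refine ((h₁.add h₂).div_const 2).congr_deriv ?_
  rw [artanh_eq_half_sub_log ht]
  field_simp
  ring

theorem two_mul_klHalf_le_mul_artanh {t : ℝ} (h₀ : 0 ≤ t) (h₁ : t < 1) :
    2 * klHalf t ≤ t * artanh t := by
  have hderiv : ∀ x ∈ Ioo (-1 : ℝ) 1, HasDerivAt (fun x => x * artanh x - 2 * klHalf x)
      (x / (1 - x ^ 2) - artanh x) x := by
    intro x hx
    refine (((hasDerivAt_id x).mul (hasDerivAt_artanh hx)).sub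
      ((hasDerivAt_klHalf hx).const_mul 2)).congr_deriv ?_
    simp only [id, one_mul]
    ring
  have hmono : MonotoneOn (fun x => x * artanh x - 2 * klHalf x) (Ico 0 1) := by
    refine monotoneOn_of_hasDerivWithinAt_nonneg (f' := fun x => x / (1 - x ^ 2) - artanh x)
      (convex_Ico 0 1)
      (fun x hx => (hderiv x ⟨by linarith [hx.1], hx.2⟩).continuousAt.continuousWithinAt)
      (fun x hx => ?_) (fun x hx => ?_) <;> rw [interior_Ico] at hx
    · exact (hderiv x ⟨by linarith [hx.1], hx.2⟩).hasDerivWithinAt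
    · exact sub_nonneg.2 (artanh_le_div_one_sub_sq hx.1.le hx.2)
  simpa [klHalf_zero] using hmono ⟨le_rfl, one_pos⟩ ⟨h₀, h₁⟩ h₀

theorem monotoneOn_klHalf_div_sq : MonotoneOn (fun t => klHalf t / t ^ 2) (Ioc 0 1) := by
  have hderiv : ∀ x ∈ Ioo (0 : ℝ) 1, HasDerivAt (fun t => klHalf t / t ^ 2)
      ((x * artanh x - 2 * klHalf x) / x ^ 3) x := by
    intro x hx
    have hx₀ : x ≠ 0 := hx.1.ne'
    refine ((hasDerivAt_klHalf ⟨by linarith [hx.1], hx.2⟩).div (hasDerivAt_pow 2 x)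
      (pow_ne_zero 2 hx₀)).congr_deriv ?_
    field_simp
    ring
  refine monotoneOn_of_hasDerivWithinAt_nonneg
    (f' := fun x => (x * artanh x - 2 * klHalf x) / x ^ 3) (convex_Ioc 0 1)
    (continuous_klHalf.continuousOn.div (continuous_pow 2).continuousOn
      fun x hx => pow_ne_zero 2 hx.1.ne')
    (fun x hx => ?_) (fun x hx => ?_) <;> rw [interior_Ioc] at hx
  · exact (hderiv x hx).hasDerivWithinAt
  · exact div_nonneg (sub_nonneg.2 (two_mul_klHalf_le_mul_artanh hx.1.le hx.2)) (pow_pos hx.1 3).le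

theorem stmt_0 (t c : ℝ) (ht : 0 < t) (htc : t ≤ c) (hc : c ≤ 1) :
    1 - binH ((1 - t) / 2) ≤ (1 - binH ((1 - c) / 2)) * (t / c) ^ 2 := by
  have hc₀ : 0 < c := ht.trans_le htc
  have hratio : klHalf t / t ^ 2 ≤ klHalf c / c ^ 2 :=
    monotoneOn_klHalf_div_sq ⟨ht, htc.trans hc⟩ ⟨hc₀, hc⟩ htc
  rw [one_sub_binH_eq, one_sub_binH_eq]
  calc klHalf t / log 2 = klHalf t / t ^ 2 * t ^ 2 / log 2 := by field_simp
    _ ≤ klHalf c / c ^ 2 * t ^ 2 / log 2 := by gcongr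
    _ = klHalf c / log 2 * (t / c) ^ 2 := by ring
end

section
/- (Wyner common information value check for DSBS) Let ε ∈ (0, 1/2), a := (1-√(1-2ε))/2, and b := (1-ε-√(1-2ε))/(2(1-ε)). Then 1 + H(ε) - 2H(a) = (1-ε)(1 - H(b)), where H is the binary entropy function base 2. -/
theorem stmt_16 (ε : ℝ) (hε0 : 0 < ε) (hε : ε < 1/2) :
    let a := (1 - Real.sqrt (1 - 2 * ε)) / 2
    let b := (1 - ε - Real.sqrt (1 - 2 * ε)) / (2 * (1 - ε))
    1 + binH ε - 2 * binH a = (1 - ε) * (1 - binH b) := by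
  intro a b
  have hs2 : Real.sqrt (1 - 2 * ε) ^ 2 = 1 - 2 * ε := Real.sq_sqrt (by linarith)
  have hs0 : (0:ℝ) ≤ Real.sqrt (1 - 2 * ε) := Real.sqrt_nonneg _
  set s := Real.sqrt (1 - 2 * ε) with hsdef
  have hs1 : s < 1 := by nlinarith
  have ha0 : 0 < a := by simp only [a]; linarith
  have ha1 : a < 1 := by simp only [a]; linarith
  have h1ε : (0:ℝ) < 1 - ε := by linarith
  have hεa : ε = 2 * a * (1 - a) := by simp only [a]; nlinarith
  have hb : b = a ^ 2 / (1 - ε) := by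
    simp only [a, b]
    rw [div_eq_div_iff (by linarith : (2:ℝ) * (1 - ε) ≠ 0) (ne_of_gt h1ε)]
    nlinarith
  have h1b : 1 - b = (1 - a) ^ 2 / (1 - ε) := by
    rw [hb]; field_simp; nlinarith
  clear_value a b
  have ha1' : (0:ℝ) < 1 - a := by linarith
  have lε : Real.logb 2 ε = 1 + Real.logb 2 a + Real.logb 2 (1 - a) := by
    rw [hεa, show (2:ℝ) * a * (1 - a) = 2 * (a * (1 - a)) by ring,
      Real.logb_mul (by norm_num) (mul_ne_zero (ne_of_gt ha0) (ne_of_gt ha1')),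
      Real.logb_mul (ne_of_gt ha0) (ne_of_gt ha1')]
    have h2 : Real.logb 2 2 = 1 := by simp
    linarith
  have lb : Real.logb 2 b = 2 * Real.logb 2 a - Real.logb 2 (1 - ε) := by
    rw [hb, Real.logb_div (pow_ne_zero 2 (ne_of_gt ha0)) (ne_of_gt h1ε), Real.logb_pow]
    push_cast; ring
  have l1b : Real.logb 2 (1 - b) = 2 * Real.logb 2 (1 - a) - Real.logb 2 (1 - ε) := by
    rw [h1b, Real.logb_div (pow_ne_zero 2 (ne_of_gt ha1')) (ne_of_gt h1ε), Real.logb_pow]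
    push_cast; ring
  unfold binH
  rw [lε, lb, l1b, h1b, hb, hεa]
  have hden : (1:ℝ) - 2 * a * (1 - a) ≠ 0 := by rw [← hεa]; exact ne_of_gt h1ε
  field_simp
  ring
end

section
/- (Stationary points of the perturbation function, boundary exclusion) Let γ ∈ (1/2, 1] and p ∈ ℝ with 0 ≤ p < γ². If t := √((γ-p)·√(γ²-p)/(2√(γ²-p) - |2γ-1|)) is real (i.e., 2√(γ²-p) > |2γ-1|, equivalently γ > p + 1/4) and satisfies t² < γ² - p, then 2γ - 1 < p < γ(2γ-1), which forces γ > 1 — a contradiction. Hence no such point exists with t² < γ² - p when γ ≤ 1. -/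
/-!
Write `c = 2γ - 1 > 0` and `s = √(γ² - p) > 0`. Clearing the positive denominator, `t² < s²`
becomes `γ - p < s (2s - c)`, i.e. `c s < γ c - p`. Hence `p < γ c`, and squaring gives
`c² (γ² - p) < (γ c - p)²`, which rearranges to `0 < p (p - c)`, so `c < p`.
But `c < p < γ c` forces `γ > 1`.
-/

lemma Real.sq_sqrt_div_lt_iff {a b d : ℝ} (ha : 0 ≤ a) (hd : 0 < d) :
    Real.sqrt (a / d) ^ 2 < b ↔ a < b * d := by
  rw [Real.sq_sqrt (div_nonneg ha hd.le), div_lt_iff₀ hd]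

lemma two_mul_sub_one_lt_and_lt_mul_of_mul_lt {γ p s : ℝ} (hc : 0 < 2 * γ - 1)
    (hp0 : 0 ≤ p) (hs : 0 < s) (hs2 : s ^ 2 = γ ^ 2 - p)
    (h : (2 * γ - 1) * s < γ * (2 * γ - 1) - p) :
    2 * γ - 1 < p ∧ p < γ * (2 * γ - 1) := by
  have hupper : p < γ * (2 * γ - 1) := by nlinarith [mul_pos hc hs]
  have hsq : (2 * γ - 1) ^ 2 * (γ ^ 2 - p) < (γ * (2 * γ - 1) - p) ^ 2 := by
    rw [← hs2, ← mul_pow]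
    exact pow_lt_pow_left₀ h (by positivity) two_ne_zero
  -- the difference of the two sides of `hsq` is exactly `p (p - (2γ - 1))`
  have hprod : 0 < p * (p - (2 * γ - 1)) := by linear_combination hsq
  exact ⟨by nlinarith, hupper⟩

theorem stmt_17 (γ p : ℝ) (hγl : 1/2 < γ) (hγu : γ ≤ 1)
    (hp0 : 0 ≤ p) (hp : p < γ ^ 2)
    (hreal : |2 * γ - 1| < 2 * Real.sqrt (γ ^ 2 - p)) :
    ¬ (Real.sqrt ((γ - p) * Real.sqrt (γ ^ 2 - p)
        / (2 * Real.sqrt (γ ^ 2 - p) - |2 * γ - 1|))) ^ 2 < γ ^ 2 - p := by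
  intro h
  have hc : 0 < 2 * γ - 1 := by linarith
  rw [abs_of_pos hc] at hreal h
  set s := Real.sqrt (γ ^ 2 - p)
  have hs2 : s ^ 2 = γ ^ 2 - p := Real.sq_sqrt (by linarith)
  have hs : 0 < s := Real.sqrt_pos.mpr (by linarith)
  have hγp : 0 < γ - p := by nlinarith
  rw [Real.sq_sqrt_div_lt_iff (by positivity) (by linarith), ← hs2] at h
  have hcancel : γ - p < s * (2 * s - (2 * γ - 1)) :=
    lt_of_mul_lt_mul_right (by linear_combination h) hs.le
  have hcs : (2 * γ - 1) * s < γ * (2 * γ - 1) - p := by linear_combination hcancel + 2 * hs2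
  obtain ⟨hlower, hupper⟩ := two_mul_sub_one_lt_and_lt_mul_of_mul_lt hc hp0 hs hs2 hcs
  linarith [mul_le_mul_of_nonneg_right hγu hc.le]
end
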